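/- arXiv:1712.05549 — 5 statements merged into one kernel-verified Lean document; each statement's English description precedes it below -/
import Mathlib

section
/- Let d ≥ 2 be an integer. There exists a constant C = C(d) > 0 such that the following holds for every finite field F of odd characteristic and every nontrivial additive character e of F. Let g : F^d → ℂ satisfy |g(x)| ≤ 1 for all x, let G ⊆ F^d be the support of g, and for z ∈ F let G_z : P → {0,1} be defined by G_z(x̄, x̄·x̄) = 1 if (x̄, z) ∈ G and G_z(x̄, x̄·x̄) = 0 otherwise. Then ‖ĝ‖_{L²(P,dσ)} ≤ C ( |G|^{1/2} + |G|^{3/8} |F|^{(d-1)/4} ( ∑_{z∈F} ‖(G_z dσ)^∨‖_{L⁴(F^d)} )^{1/2} ). -/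
open Finset

/-- The finite field extension operator for the paraboloid
`P = {(x̄, x̄·x̄) : x̄ ∈ F^{d-1}} ⊆ F^d`, with a function on `P` parameterized by `x̄`:
`(f dσ)^∨(x) = |F|^{-(d-1)} ∑_{ξ ∈ P} f(ξ) e(x·ξ)`. -/
noncomputable def extOp {F : Type} [Field F] [Fintype F] {d : ℕ} (e : AddChar F ℂ)
    (f : (Fin (d - 1) → F) → ℂ) (x : (Fin (d - 1) → F) × F) : ℂ :=
  ((Fintype.card F : ℂ) ^ (d - 1))⁻¹ *
    ∑ y : Fin (d - 1) → F, f y * e (∑ i, x.1 i * y i + x.2 * ∑ i, y i * y i)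

/-- The Fourier transform `ĝ(ξ) = ∑_{x ∈ F^d} g(x) e(−x·ξ)` of `g : F^d → ℂ`, restricted
to the paraboloid and parameterized by `ȳ ∈ F^{d-1}` (i.e. evaluated at `ξ = (ȳ, ȳ·ȳ)`). -/
noncomputable def fourierP {F : Type} [Field F] [Fintype F] {d : ℕ} (e : AddChar F ℂ)
    (g : (Fin (d - 1) → F) × F → ℂ) (y : Fin (d - 1) → F) : ℂ :=
  ∑ x : (Fin (d - 1) → F) × F, g x * e (-(∑ i, x.1 i * y i + x.2 * ∑ i, y i * y i))

/-- `‖ĝ‖_{L²(P,dσ)} = (|F|^{-(d-1)} ∑_{ξ∈P} |ĝ(ξ)|²)^{1/2}`. -/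
noncomputable def l2P {F : Type} [Field F] [Fintype F] {d : ℕ} (e : AddChar F ℂ)
    (g : (Fin (d - 1) → F) × F → ℂ) : ℝ :=
  (((Fintype.card F : ℝ) ^ (d - 1))⁻¹ *
    ∑ y : Fin (d - 1) → F, ‖fourierP e g y‖ ^ 2) ^ ((1 : ℝ) / 2)

/-!
By duality, `‖ĝ‖²_{L²(P,dσ)} = ⟨g, (ĝ dσ)^∨⟩` and `(ĝ dσ)^∨ = g ∗ (dσ)^∨`. The kernel `(dσ)^∨` is
the Dirac mass at `0` on the hyperplane `x_d = 0`, and off it a quadratic phase times a Gauss sum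
of modulus `|F|^{-(d-1)/2}`. Splitting `g` into its horizontal slices `g_z = g(·, z)`, this gives
`(ĝ dσ)^∨ = g + ∑_z B_z`, where `B_z(x̄, t)` is, up to a unimodular factor, `|F|^{(d-1)/2}` times
`(g_z dσ)^∨(x̄ / 2s, -1 / 4s)` with `s = t - z ≠ 0`. As this reparametrisation is injective,
`‖B_z‖_4 ≤ |F|^{(d-1)/2} ‖(g_z dσ)^∨‖_4 ≤ |F|^{(d-1)/2} ‖(G_z dσ)^∨‖_4`; the last step holds because
`‖(f dσ)^∨‖_4⁴` is, by Plancherel, a sum of products `f y₁ f y₂ f̄ y₃ f̄ y₄` over the solutions of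
`y₁ + y₂ = y₃ + y₄`, `|y₁|² + |y₂|² = |y₃|² + |y₄|²`, hence monotone in `|f|`. Hölder and
Minkowski then give `‖ĝ‖² ≤ |G| + |G|^{3/4} ∑_z ‖B_z‖_4`, and taking square roots gives the theorem
with `C = 1`.
-/

lemma AddChar.map_sum_eq_prod {A M ι : Type*} [AddCommMonoid A] [CommMonoid M]
    (ψ : AddChar A M) (s : Finset ι) (f : ι → A) : ψ (∑ i ∈ s, f i) = ∏ i ∈ s, ψ (f i) := by
  induction s using Finset.cons_induction with
  | empty => simp
  | cons a s ha ih => rw [Finset.sum_cons, Finset.prod_cons, ψ.map_add_eq_mul, ih]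

lemma four_ne_zero_of_two_ne_zero {R : Type*} [Ring R] [NoZeroDivisors R] (h2 : (2 : R) ≠ 0) :
    (4 : R) ≠ 0 := by
  rw [show (4 : R) = 2 * 2 by norm_num]
  exact mul_ne_zero h2 h2

lemma le_rpow_half_add_rpow_half {R a b : ℝ} (hR : 0 ≤ R) (ha : 0 ≤ a) (hb : 0 ≤ b)
    (h : R ^ 2 ≤ a + b) : R ≤ a ^ ((1 : ℝ) / 2) + b ^ ((1 : ℝ) / 2) :=
  calc R = (R ^ 2) ^ ((1 : ℝ) / 2) := by rw [← Real.sqrt_eq_rpow, Real.sqrt_sq hR]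
    _ ≤ (a + b) ^ ((1 : ℝ) / 2) := by gcongr
    _ ≤ _ := Real.rpow_add_le_add_rpow ha hb (by norm_num) (by norm_num)

lemma sum_le_card_rpow_mul_rpow_sum_rpow {V : Type*} [Fintype V] {p q : ℝ}
    (hpq : p.HolderConjugate q) (s : Finset V) {b : V → ℝ} (hb : ∀ x, 0 ≤ b x) :
    ∑ x ∈ s, b x ≤ (s.card : ℝ) ^ (1 / p) * (∑ x, b x ^ q) ^ (1 / q) := by
  have h := Real.inner_le_Lp_mul_Lq_of_nonneg s hpq (f := fun _ => 1) (g := b)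
    (fun _ _ => zero_le_one) (fun x _ => hb x)
  simp only [one_mul, Real.one_rpow, Finset.sum_const, nsmul_eq_mul, mul_one] at h
  refine h.trans (mul_le_mul_of_nonneg_left ?_ (by positivity))
  exact Real.rpow_le_rpow (Finset.sum_nonneg fun x _ => Real.rpow_nonneg (hb x) q)
    (Finset.sum_le_univ_sum_of_nonneg fun x => Real.rpow_nonneg (hb x) q)
    (one_div_nonneg.mpr hpq.symm.nonneg)

lemma rpow_sum_norm_sum_pow_le {V κ E : Type*} [Fintype V] [SeminormedAddCommGroup E]
    (n : ℕ) (hn : 1 ≤ n) (s : Finset κ) (f : κ → V → E) :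
    (∑ x, ‖∑ k ∈ s, f k x‖ ^ n) ^ (1 / (n : ℝ)) ≤ ∑ k ∈ s, (∑ x, ‖f k x‖ ^ n) ^ (1 / (n : ℝ)) := by
  have : Fact (1 ≤ (n : ENNReal)) := ⟨by exact_mod_cast hn⟩
  have h := norm_sum_le s fun k => WithLp.toLp n (f k)
  simp only [← WithLp.toLp_sum, PiLp.norm_eq_of_nat n rfl, Finset.sum_apply] at h
  exact h

namespace Paraboloid

open Complex ComplexConjugate

variable {F : Type} [Field F] [Fintype F] {e : AddChar F ℂ}

section Kernel

variable {ι : Type*} [Fintype ι] [DecidableEq ι]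

/-- For `ι = Fin (d - 1)`, `paraboloidKernel e v s = |F|^{d-1} (dσ)^∨(v, s)`. -/
noncomputable def paraboloidKernel (e : AddChar F ℂ) (v : ι → F) (s : F) : ℂ :=
  ∑ y : ι → F, e (v ⬝ᵥ y + s * (y ⬝ᵥ y))

lemma paraboloidKernel_eq_mul (h2 : (2 : F) ≠ 0) {s : F} (hs : s ≠ 0) (v : ι → F) :
    paraboloidKernel e v s = e (-((v ⬝ᵥ v) * (4 * s)⁻¹)) * paraboloidKernel e (0 : ι → F) s := by
  have h4 := four_ne_zero_of_two_ne_zero h2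
  rw [paraboloidKernel, paraboloidKernel, Finset.mul_sum]
  refine Fintype.sum_equiv (Equiv.addRight ((2 * s)⁻¹ • v)) _ _ fun y => ?_
  rw [← AddChar.map_add_eq_mul, Equiv.coe_addRight]
  congr 1
  simp only [add_dotProduct, dotProduct_add, smul_dotProduct, dotProduct_smul, smul_eq_mul,
    zero_dotProduct, dotProduct_comm y v]
  field_simp
  ring

variable [DecidableEq F]

lemma sum_addChar_mul_eq_ite (he : e ≠ 1) (c : F) :
    ∑ t : F, e (t * c) = if c = 0 then (Fintype.card F : ℂ) else 0 := by
  rw [AddChar.sum_mulShift c (AddChar.IsPrimitive.of_ne_one he), Nat.cast_ite, Nat.cast_zero]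

lemma sum_addChar_dotProduct_eq_ite (he : e ≠ 1) (v : ι → F) :
    ∑ y : ι → F, e (y ⬝ᵥ v) = if v = 0 then (Fintype.card F : ℂ) ^ Fintype.card ι else 0 := by
  simp_rw [dotProduct, AddChar.map_sum_eq_prod]
  rw [← Fintype.prod_sum (fun i t => e (t * v i))]
  simp_rw [sum_addChar_mul_eq_ite he, Finset.prod_ite_zero, funext_iff, Finset.mem_univ,
    true_implies, Finset.prod_const, Finset.card_univ, Pi.zero_apply]

lemma sum_addChar_pairing_eq_ite (he : e ≠ 1) (v : (ι → F) × F) :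
    ∑ x : (ι → F) × F, e (x.1 ⬝ᵥ v.1 + x.2 * v.2) =
      if v = 0 then (Fintype.card F : ℂ) ^ (Fintype.card ι + 1) else 0 := by
  simp_rw [Fintype.sum_prod_type, AddChar.map_add_eq_mul, ← Finset.sum_mul_sum,
    sum_addChar_dotProduct_eq_ite he, sum_addChar_mul_eq_ite he, Prod.ext_iff,
    ite_zero_mul_ite_zero, pow_succ, Prod.fst_zero, Prod.snd_zero]

lemma sum_norm_sq_sum_mul_addChar (he : e ≠ 1) {κ : Type*} [Fintype κ]
    (φ : κ → (ι → F) × F) (c : κ → ℂ) :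
    ((∑ x : (ι → F) × F, ‖∑ k, c k * e (x.1 ⬝ᵥ (φ k).1 + x.2 * (φ k).2)‖ ^ 2 : ℝ) : ℂ) =
      (Fintype.card F : ℂ) ^ (Fintype.card ι + 1) *
        ∑ k, ∑ l, if φ k = φ l then c k * conj (c l) else 0 := by
  have hterm : ∀ (x : (ι → F) × F) k l,
      c k * e (x.1 ⬝ᵥ (φ k).1 + x.2 * (φ k).2) *
          (conj (c l) * e (-(x.1 ⬝ᵥ (φ l).1 + x.2 * (φ l).2)))
        = c k * conj (c l) * e (x.1 ⬝ᵥ (φ k - φ l).1 + x.2 * (φ k - φ l).2) := by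
    intro x k l
    rw [mul_mul_mul_comm, ← AddChar.map_add_eq_mul, Prod.fst_sub, Prod.snd_sub, dotProduct_sub]
    ring_nf
  push_cast
  simp_rw [← Complex.mul_conj', map_sum, map_mul, ← AddChar.map_neg_eq_conj, Finset.sum_mul_sum,
    hterm]
  rw [Finset.sum_comm]
  simp_rw [Finset.sum_comm (s := (Finset.univ : Finset ((ι → F) × F))), ← Finset.mul_sum,
    sum_addChar_pairing_eq_ite he, sub_eq_zero, Finset.mul_sum, mul_ite, mul_zero, mul_comm]

/-- By Plancherel both sides are `|F|^{|ι|+1}` times a sum over the coincidences `φ k = φ l`. -/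
lemma sum_norm_sq_sum_mul_addChar_le (he : e ≠ 1) {κ : Type*} [Fintype κ]
    (φ : κ → (ι → F) × F) (c : κ → ℂ) (r : κ → ℝ) (hcr : ∀ k, ‖c k‖ ≤ r k) :
    ∑ x : (ι → F) × F, ‖∑ k, c k * e (x.1 ⬝ᵥ (φ k).1 + x.2 * (φ k).2)‖ ^ 2 ≤
      ∑ x : (ι → F) × F, ‖∑ k, (r k : ℂ) * e (x.1 ⬝ᵥ (φ k).1 + x.2 * (φ k).2)‖ ^ 2 := by
  set N : ℝ := (Fintype.card F : ℝ) ^ (Fintype.card ι + 1)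
  have hr : ∑ x : (ι → F) × F, ‖∑ k, (r k : ℂ) * e (x.1 ⬝ᵥ (φ k).1 + x.2 * (φ k).2)‖ ^ 2 =
      N * ∑ k, ∑ l, if φ k = φ l then r k * r l else 0 := by
    apply Complex.ofReal_injective
    rw [sum_norm_sq_sum_mul_addChar he]
    push_cast [N, apply_ite, conj_ofReal]
    rfl
  calc _ = ‖((∑ x : (ι → F) × F,
          ‖∑ k, c k * e (x.1 ⬝ᵥ (φ k).1 + x.2 * (φ k).2)‖ ^ 2 : ℝ) : ℂ)‖ := by
        rw [Complex.norm_real, Real.norm_of_nonneg (by positivity)]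
    _ ≤ N * ∑ k, ∑ l, if φ k = φ l then r k * r l else 0 := by
        rw [sum_norm_sq_sum_mul_addChar he, norm_mul, norm_pow, Complex.norm_natCast]
        gcongr
        refine (norm_sum_le _ _).trans <| Finset.sum_le_sum fun k _ =>
          (norm_sum_le _ _).trans <| Finset.sum_le_sum fun l _ => ?_
        split_ifs
        · rw [norm_mul, RCLike.norm_conj]
          exact mul_le_mul (hcr k) (hcr l) (norm_nonneg _) ((norm_nonneg _).trans (hcr k))
        · rw [norm_zero]
    _ = _ := hr.symm

lemma paraboloidKernel_zero_right (he : e ≠ 1) (v : ι → F) :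
    paraboloidKernel e v 0 = if v = 0 then (Fintype.card F : ℂ) ^ Fintype.card ι else 0 := by
  simp only [paraboloidKernel, zero_mul, add_zero, dotProduct_comm v]
  exact sum_addChar_dotProduct_eq_ite he v

lemma norm_paraboloidKernel_zero_left_sq (he : e ≠ 1) (h2 : (2 : F) ≠ 0) {s : F} (hs : s ≠ 0) :
    ‖paraboloidKernel e (0 : ι → F) s‖ ^ 2 = (Fintype.card F : ℝ) ^ Fintype.card ι := by
  apply Complex.ofReal_injective
  push_cast
  rw [← Complex.mul_conj', paraboloidKernel, map_sum, Finset.sum_mul_sum, Finset.sum_comm]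
  have hshift : ∀ y' : ι → F, ∑ y : ι → F,
      e ((0 : ι → F) ⬝ᵥ y + s * (y ⬝ᵥ y)) * conj (e ((0 : ι → F) ⬝ᵥ y' + s * (y' ⬝ᵥ y'))) =
        ∑ h : ι → F, e (s * (h ⬝ᵥ h)) * e (y' ⬝ᵥ ((2 * s) • h)) := by
    intro y'
    refine Fintype.sum_equiv (Equiv.subRight y') _ _ fun y => ?_
    rw [← AddChar.map_neg_eq_conj, ← AddChar.map_add_eq_mul, ← AddChar.map_add_eq_mul,
      Equiv.subRight_apply]
    congr 1
    simp only [zero_dotProduct, sub_dotProduct, dotProduct_sub, dotProduct_smul, smul_eq_mul,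
      dotProduct_comm y' y]
    ring
  simp_rw [hshift]
  rw [Finset.sum_comm]
  simp_rw [← Finset.mul_sum, sum_addChar_dotProduct_eq_ite he, smul_eq_zero,
    mul_ne_zero h2 hs, false_or, mul_ite, mul_zero]
  simp

end Kernel

section Extension

variable {d : ℕ}

lemma extOp_apply (f : (Fin (d - 1) → F) → ℂ) (x : (Fin (d - 1) → F) × F) :
    extOp e f x = ((Fintype.card F : ℂ) ^ (d - 1))⁻¹ *
      ∑ y : Fin (d - 1) → F, f y * e (x.1 ⬝ᵥ y + x.2 * (y ⬝ᵥ y)) :=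
  rfl

lemma fourierP_apply (g : (Fin (d - 1) → F) × F → ℂ) (y : Fin (d - 1) → F) :
    fourierP e g y = ∑ x : (Fin (d - 1) → F) × F, g x * e (-(x.1 ⬝ᵥ y + x.2 * (y ⬝ᵥ y))) :=
  rfl

lemma extOp_sq (f : (Fin (d - 1) → F) → ℂ) (x : (Fin (d - 1) → F) × F) :
    extOp e f x ^ 2 = ((Fintype.card F : ℂ) ^ (d - 1))⁻¹ ^ 2 *
      ∑ p : (Fin (d - 1) → F) × (Fin (d - 1) → F),
        f p.1 * f p.2 * e (x.1 ⬝ᵥ (p.1 + p.2) + x.2 * (p.1 ⬝ᵥ p.1 + p.2 ⬝ᵥ p.2)) := by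
  rw [extOp_apply, mul_pow, sq (Finset.sum _ _), Finset.sum_mul_sum, ← Fintype.sum_prod_type']
  congr 1
  refine Fintype.sum_congr _ _ fun p => ?_
  rw [mul_mul_mul_comm, ← AddChar.map_add_eq_mul, dotProduct_add]
  ring_nf

lemma extOp_fourierP (g : (Fin (d - 1) → F) × F → ℂ) (x : (Fin (d - 1) → F) × F) :
    extOp e (fourierP e g) x = ((Fintype.card F : ℂ) ^ (d - 1))⁻¹ *
      ∑ x' : (Fin (d - 1) → F) × F, g x' * paraboloidKernel e (x.1 - x'.1) (x.2 - x'.2) := by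
  rw [extOp_apply]
  congr 1
  simp_rw [fourierP_apply, paraboloidKernel, Finset.sum_mul, Finset.mul_sum]
  rw [Finset.sum_comm]
  refine Fintype.sum_congr _ _ fun x' => Fintype.sum_congr _ _ fun y => ?_
  rw [mul_assoc, ← AddChar.map_add_eq_mul, sub_dotProduct]
  ring_nf

lemma sum_mul_conj_extOp_fourierP (g : (Fin (d - 1) → F) × F → ℂ) :
    ∑ x, g x * conj (extOp e (fourierP e g) x) =
      (((Fintype.card F : ℝ) ^ (d - 1))⁻¹ * ∑ y, ‖fourierP e g y‖ ^ 2 : ℝ) := by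
  push_cast
  simp_rw [← Complex.mul_conj', extOp_apply, map_mul, map_sum, map_mul, map_inv₀, map_pow,
    Complex.conj_natCast, ← AddChar.map_neg_eq_conj, Finset.mul_sum]
  rw [Finset.sum_comm]
  refine Finset.sum_congr rfl fun y _ => ?_
  rw [fourierP_apply, Finset.sum_mul, Finset.mul_sum]
  refine Finset.sum_congr rfl fun x _ => ?_
  ring

lemma sq_l2P (g : (Fin (d - 1) → F) × F → ℂ) :
    l2P e g ^ 2 = ((Fintype.card F : ℝ) ^ (d - 1))⁻¹ * ∑ y, ‖fourierP e g y‖ ^ 2 := by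
  rw [l2P, ← Real.sqrt_eq_rpow, Real.sq_sqrt (by positivity)]

variable [DecidableEq F]

/-- `((f dσ)^∨)²` is a character sum with coefficients `f y₁ * f y₂`. -/
lemma sum_norm_extOp_pow_four_le (he : e ≠ 1) (f : (Fin (d - 1) → F) → ℂ)
    (r : (Fin (d - 1) → F) → ℝ) (hfr : ∀ y, ‖f y‖ ≤ r y) :
    ∑ x : (Fin (d - 1) → F) × F, ‖extOp e f x‖ ^ 4 ≤
      ∑ x : (Fin (d - 1) → F) × F, ‖extOp e (fun y => (r y : ℂ)) x‖ ^ 4 := by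
  have h4 : ∀ z : ℂ, ‖z‖ ^ 4 = ‖z ^ 2‖ ^ 2 := fun z => by rw [norm_pow, ← pow_mul]
  simp_rw [h4, extOp_sq, norm_mul, mul_pow, ← Finset.mul_sum]
  gcongr 1
  have := sum_norm_sq_sum_mul_addChar_le he
    (fun p : (Fin (d - 1) → F) × (Fin (d - 1) → F) => (p.1 + p.2, p.1 ⬝ᵥ p.1 + p.2 ⬝ᵥ p.2))
    (fun p => f p.1 * f p.2) (fun p => r p.1 * r p.2) fun p => by
      rw [norm_mul]
      exact mul_le_mul (hfr _) (hfr _) (norm_nonneg _) ((norm_nonneg _).trans (hfr _))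
  push_cast at this
  exact this

/-- The contribution of the slice `g(·, z)` to `(ĝ dσ)^∨ = g ∗ (dσ)^∨`, off the hyperplane
`x_d = z`. -/
noncomputable def sliceTerm (e : AddChar F ℂ) (g : (Fin (d - 1) → F) × F → ℂ) (z : F)
    (x : (Fin (d - 1) → F) × F) : ℂ :=
  if x.2 = z then 0
  else ((Fintype.card F : ℂ) ^ (d - 1))⁻¹ *
    ∑ w, g (w, z) * paraboloidKernel e (x.1 - w) (x.2 - z)

lemma extOp_fourierP_eq_add_sum_sliceTerm (he : e ≠ 1) (g : (Fin (d - 1) → F) × F → ℂ)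
    (x : (Fin (d - 1) → F) × F) :
    extOp e (fourierP e g) x = g x + ∑ z, sliceTerm e g z x := by
  rw [extOp_fourierP, Fintype.sum_prod_type_right,
    ← Finset.add_sum_erase _ _ (Finset.mem_univ x.2), mul_add,
    ← Finset.sum_erase (a := x.2) Finset.univ (f := fun z => sliceTerm e g z x)
      (by simp [sliceTerm])]
  congr 1
  · simp only [sub_self, paraboloidKernel_zero_right he, sub_eq_zero, Fintype.card_fin, mul_ite,
      mul_zero, sum_ite_eq, mem_univ, ↓reduceIte, Prod.mk.eta]
    field_simp
  · rw [Finset.mul_sum]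
    refine Finset.sum_congr rfl fun z hz => ?_
    rw [sliceTerm, if_neg (Finset.ne_of_mem_erase hz).symm]

lemma sq_l2P_le_card_add_sum_norm (he : e ≠ 1) (g : (Fin (d - 1) → F) × F → ℂ)
    (hg : ∀ x, ‖g x‖ ≤ 1) (G : Finset ((Fin (d - 1) → F) × F)) (hgG : ∀ x ∉ G, g x = 0) :
    l2P e g ^ 2 ≤ G.card + ∑ x ∈ G, ‖∑ z, sliceTerm e g z x‖ := by
  have hre : l2P e g ^ 2 =
      ∑ x, (‖g x‖ ^ 2 + (g x * conj (∑ z, sliceTerm e g z x)).re) := by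
    rw [sq_l2P, ← Complex.ofReal_re (_ * _), ← sum_mul_conj_extOp_fourierP]
    simp_rw [extOp_fourierP_eq_add_sum_sliceTerm he, map_add, mul_add, Complex.re_sum,
      Complex.add_re, Complex.mul_conj', ← Complex.ofReal_pow, Complex.ofReal_re]
  rw [hre, ← Finset.sum_subset (Finset.subset_univ G) fun x _ hx => by simp [hgG x hx],
    Finset.card_eq_sum_ones, Nat.cast_sum, ← Finset.sum_add_distrib]
  refine Finset.sum_le_sum fun x _ => add_le_add ?_ ?_
  · simpa using hg x
  · refine (Complex.re_le_norm _).trans ?_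
    rw [norm_mul, RCLike.norm_conj]
    exact mul_le_of_le_one_left (norm_nonneg _) (hg x)

lemma sliceTerm_eq (h2 : (2 : F) ≠ 0) (g : (Fin (d - 1) → F) × F → ℂ) {z : F}
    {x : (Fin (d - 1) → F) × F} (hx : x.2 ≠ z) :
    sliceTerm e g z x = e (-((x.1 ⬝ᵥ x.1) * (4 * (x.2 - z))⁻¹)) *
      paraboloidKernel e (0 : Fin (d - 1) → F) (x.2 - z) *
      extOp e (fun w => g (w, z)) ((2 * (x.2 - z))⁻¹ • x.1, -(4 * (x.2 - z))⁻¹) := by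
  have hs : x.2 - z ≠ 0 := sub_ne_zero.mpr hx
  rw [sliceTerm, if_neg hx, extOp_apply]
  generalize x.2 - z = s at hs ⊢
  have h4 := four_ne_zero_of_two_ne_zero h2
  have hphase : ∀ w : Fin (d - 1) → F, e (-((x.1 - w) ⬝ᵥ (x.1 - w) * (4 * s)⁻¹)) =
      e (-((x.1 ⬝ᵥ x.1) * (4 * s)⁻¹)) * e (((2 * s)⁻¹ • x.1) ⬝ᵥ w + -(4 * s)⁻¹ * (w ⬝ᵥ w)) := by
    intro w
    rw [← AddChar.map_add_eq_mul]
    congr 1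
    simp only [sub_dotProduct, dotProduct_sub, smul_dotProduct, smul_eq_mul, dotProduct_comm w]
    field_simp
    ring
  simp_rw [paraboloidKernel_eq_mul h2 hs (_ - _), hphase, Finset.mul_sum]
  refine Finset.sum_congr rfl fun w _ => ?_
  ring

lemma norm_sliceTerm_pow_four (he : e ≠ 1) (h2 : (2 : F) ≠ 0) (g : (Fin (d - 1) → F) × F → ℂ)
    {z : F} {x : (Fin (d - 1) → F) × F} (hx : x.2 ≠ z) :
    ‖sliceTerm e g z x‖ ^ 4 = ((Fintype.card F : ℝ) ^ (d - 1)) ^ 2 *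
      ‖extOp e (fun w => g (w, z)) ((2 * (x.2 - z))⁻¹ • x.1, -(4 * (x.2 - z))⁻¹)‖ ^ 4 := by
  rw [sliceTerm_eq h2 g hx, norm_mul, norm_mul, AddChar.norm_apply, one_mul, mul_pow,
    show 4 = 2 * 2 from rfl, pow_mul _ 2 2,
    norm_paraboloidKernel_zero_left_sq he h2 (sub_ne_zero.mpr hx), Fintype.card_fin]

lemma sum_norm_sliceTerm_pow_four_le (he : e ≠ 1) (h2 : (2 : F) ≠ 0)
    (g : (Fin (d - 1) → F) × F → ℂ) (z : F) :
    ∑ x, ‖sliceTerm e g z x‖ ^ 4 ≤ ((Fintype.card F : ℝ) ^ (d - 1)) ^ 2 *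
      ∑ x, ‖extOp e (fun w => g (w, z)) x‖ ^ 4 := by
  set φ : (Fin (d - 1) → F) × F → (Fin (d - 1) → F) × F :=
    fun x => ((2 * (x.2 - z))⁻¹ • x.1, -(4 * (x.2 - z))⁻¹)
  have h4 := four_ne_zero_of_two_ne_zero h2
  have hφ : Set.InjOn φ (Finset.univ.filter fun x : (Fin (d - 1) → F) × F => x.2 ≠ z) := by
    intro x hx x' hx' hxx'
    simp only [Finset.coe_filter, Finset.mem_univ, true_and, Set.mem_ofPred_eq] at hx hx'
    simp only [φ, Prod.mk.injEq] at hxx'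
    obtain ⟨h1, h2'⟩ := hxx'
    have hs : x.2 - z = x'.2 - z :=
      mul_left_cancel₀ h4 (inv_injective (neg_injective h2'))
    rw [hs] at h1
    exact Prod.ext (smul_right_injective _ (inv_ne_zero (mul_ne_zero h2 (sub_ne_zero.mpr hx'))) h1)
      (sub_left_injective hs)
  calc ∑ x, ‖sliceTerm e g z x‖ ^ 4
      = ∑ x ∈ Finset.univ.filter fun x : (Fin (d - 1) → F) × F => x.2 ≠ z,
          ((Fintype.card F : ℝ) ^ (d - 1)) ^ 2 * ‖extOp e (fun w => g (w, z)) (φ x)‖ ^ 4 := by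
        rw [Finset.sum_filter]
        refine Finset.sum_congr rfl fun x _ => ?_
        split_ifs with hx
        · exact norm_sliceTerm_pow_four he h2 g hx
        · simp [sliceTerm, not_not.mp hx]
    _ ≤ _ := by
        rw [← Finset.mul_sum, ← Finset.sum_image (g := φ) (f := fun y => ‖extOp e _ y‖ ^ 4) hφ]
        gcongr
        exact Finset.subset_univ _

lemma rpow_sum_norm_sliceTerm_le (he : e ≠ 1) (h2 : (2 : F) ≠ 0)
    (g : (Fin (d - 1) → F) × F → ℂ) (hg : ∀ x, ‖g x‖ ≤ 1)
    (G : Finset ((Fin (d - 1) → F) × F)) (hgG : ∀ x ∉ G, g x = 0) (z : F) :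
    (∑ x, ‖sliceTerm e g z x‖ ^ 4) ^ ((1 : ℝ) / 4) ≤
      (Fintype.card F : ℝ) ^ (((d - 1 : ℕ) : ℝ) / 2) *
        (∑ x, ‖extOp e (fun w => if (w, z) ∈ G then (1 : ℂ) else 0) x‖ ^ 4) ^ ((1 : ℝ) / 4) := by
  have hslice : ∀ w, ‖g (w, z)‖ ≤ if (w, z) ∈ G then (1 : ℝ) else 0 := by
    intro w
    split_ifs with hw
    · exact hg _
    · rw [hgG _ hw, norm_zero]
  have h := (sum_norm_sliceTerm_pow_four_le he h2 g z).trans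
    (mul_le_mul_of_nonneg_left (sum_norm_extOp_pow_four_le he _ _ hslice) (by positivity))
  simp only [apply_ite (fun r : ℝ => (r : ℂ)), Complex.ofReal_one, Complex.ofReal_zero] at h
  calc _ ≤ (((Fintype.card F : ℝ) ^ (d - 1)) ^ 2 *
        ∑ x, ‖extOp e (fun w => if (w, z) ∈ G then (1 : ℂ) else 0) x‖ ^ 4) ^ ((1 : ℝ) / 4) := by
        gcongr
    _ = _ := by
        rw [Real.mul_rpow (by positivity) (by positivity), ← pow_mul, ← Real.rpow_natCast,
          ← Real.rpow_mul (by positivity)]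
        congr 2
        push_cast
        ring

theorem sq_l2P_le (he : e ≠ 1) (h2 : (2 : F) ≠ 0) (g : (Fin (d - 1) → F) × F → ℂ)
    (hg : ∀ x, ‖g x‖ ≤ 1) (G : Finset ((Fin (d - 1) → F) × F)) (hgG : ∀ x ∉ G, g x = 0) :
    l2P e g ^ 2 ≤ G.card + (G.card : ℝ) ^ ((3 : ℝ) / 4) *
      ((Fintype.card F : ℝ) ^ (((d - 1 : ℕ) : ℝ) / 2) *
        ∑ z : F, (∑ x, ‖extOp e (fun w => if (w, z) ∈ G then (1 : ℂ) else 0) x‖ ^ 4)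
          ^ ((1 : ℝ) / 4)) := by
  have hholder : ∑ x ∈ G, ‖∑ z, sliceTerm e g z x‖ ≤
      (G.card : ℝ) ^ ((3 : ℝ) / 4) * (∑ x, ‖∑ z, sliceTerm e g z x‖ ^ 4) ^ ((1 : ℝ) / 4) := by
    convert sum_le_card_rpow_mul_rpow_sum_rpow
      (⟨by norm_num, by norm_num, by norm_num⟩ : Real.HolderConjugate (4 / 3) 4) G
      (fun x => norm_nonneg (∑ z, sliceTerm e g z x)) using 3
    · norm_num
    · norm_cast
  calc l2P e g ^ 2 ≤ G.card + ∑ x ∈ G, ‖∑ z, sliceTerm e g z x‖ :=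
        sq_l2P_le_card_add_sum_norm he g hg G hgG
    _ ≤ G.card + (G.card : ℝ) ^ ((3 : ℝ) / 4) *
          ∑ z, (∑ x, ‖sliceTerm e g z x‖ ^ 4) ^ ((1 : ℝ) / 4) := by
        grw [hholder]
        gcongr
        simpa using rpow_sum_norm_sum_pow_le 4 (by norm_num) Finset.univ
          fun z x => sliceTerm e g z x
    _ ≤ _ := by
        gcongr
        rw [Finset.mul_sum]
        gcongr with z
        exact rpow_sum_norm_sliceTerm_le he h2 g hg G hgG z

end Extension

end Paraboloid

/-- The Mockenhaupt–Tao machine: for `g : F^d → ℂ` with `|g| ≤ 1`, support `G`, and slices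
`G_z` (the indicator on the paraboloid of `{x̄ : (x̄, z) ∈ G}`),
`‖ĝ‖_{L²(P,dσ)} ≤ C (|G|^{1/2} + |G|^{3/8} |F|^{(d-1)/4} (∑_{z∈F} ‖(G_z dσ)^∨‖_{L⁴(F^d)})^{1/2})`. -/
theorem stmt4 (d : ℕ) (hd : 2 ≤ d) :
    ∃ C : ℝ, 0 < C ∧
      ∀ (F : Type) [Field F] [Fintype F] [DecidableEq F], ringChar F ≠ 2 →
      ∀ (e : AddChar F ℂ), e ≠ 1 →
      ∀ g : (Fin (d - 1) → F) × F → ℂ, (∀ x, ‖g x‖ ≤ 1) →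
      ∀ G : Finset ((Fin (d - 1) → F) × F), (∀ x, x ∈ G ↔ g x ≠ 0) →
        l2P e g ≤ C * ((G.card : ℝ) ^ ((1 : ℝ) / 2) +
          (G.card : ℝ) ^ ((3 : ℝ) / 8) * (Fintype.card F : ℝ) ^ (((d : ℝ) - 1) / 4) *
            (∑ z : F, (∑ x : (Fin (d - 1) → F) × F,
                ‖extOp e (fun w => if (w, z) ∈ G then (1 : ℂ) else 0) x‖ ^ 4)
              ^ ((1 : ℝ) / 4)) ^ ((1 : ℝ) / 2)) := by
  refine ⟨1, one_pos, fun F _ _ _ hF e he g hg G hG => ?_⟩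
  have hbound := Paraboloid.sq_l2P_le he (Ring.two_ne_zero hF) g hg G
    fun x hx => not_not.mp (mt (hG x).mpr hx)
  rw [Nat.cast_sub (by omega), Nat.cast_one] at hbound
  rw [one_mul]
  refine (le_rpow_half_add_rpow_half (by rw [l2P]; positivity) (by positivity)
    (by positivity) hbound).trans_eq ?_
  rw [Real.mul_rpow (by positivity) (by positivity), Real.mul_rpow (by positivity) (by positivity),
    ← Real.rpow_mul (by positivity), ← Real.rpow_mul (by positivity),
    show (3 : ℝ) / 4 * (1 / 2) = 3 / 8 by norm_num,
    show ((d : ℝ) - 1) / 2 * (1 / 2) = ((d : ℝ) - 1) / 4 by ring, mul_assoc]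
end

section
/- Let n ≥ 3 be an odd integer. There exists a constant C = C(n) > 0 such that for every finite field F of odd characteristic and every nontrivial additive character e of F, the 0-sphere S₀ = {ξ ∈ F^n : ξ·ξ = 0} satisfies: | ∑_{ξ∈S₀} e(α·ξ) | ≤ C |F|^{(n-1)/2} for every α ∈ F^n with α ≠ 0, and C^{-1} |F|^{n-1} ≤ |S₀| ≤ C |F|^{n-1}. -/
/-!
Write `q = #F`, `χ` for the quadratic character and `g` for its Gauss sum, `|g| = √q`.
Detecting `ξ·ξ = 0` by `q·[s = 0] = ∑ₜ e(t s)` gives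
`q ∑_{ξ ∈ S₀} e(α·ξ) = ∑ₜ ∏ᵢ ∑ₓ e(t x² + αᵢ x)`.
The `t = 0` term is `qⁿ·[α = 0]`; for `t ≠ 0`, completing the square and
`∑ₓ e(t x²) = χ(t) g` turn the product into `χ(t)ⁿ gⁿ e(-(α·α)/4 · t⁻¹)`, and `χ(t)ⁿ = χ(t)`
because `n` is odd. Substituting `t ↦ t⁻¹`, the sum over `t` is the Gauss sum of `χ` against
`e(-(α·α)/4 · _)`, of absolute value at most `√q` and zero when `α = 0`. Hence `|S₀| = qⁿ⁻¹`
exactly, and `|∑_{ξ ∈ S₀} e(α·ξ)| ≤ √q^{n+1}/q = q^{(n-1)/2}` for `α ≠ 0`, so `C = 1` works.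
-/

open Finset

lemma MulChar.IsQuadratic.apply_inv {G R : Type*} [CommGroupWithZero G] [CommRing R]
    {χ : MulChar G R} (hχ : χ.IsQuadratic) (a : G) : χ a⁻¹ = χ a := by
  rw [← MulChar.inv_apply', hχ.inv]

lemma MulChar.IsQuadratic.norm_apply_le_one {M : Type*} [CommMonoid M] {χ : MulChar M ℂ}
    (hχ : χ.IsQuadratic) (a : M) : ‖χ a‖ ≤ 1 := by
  rcases hχ a with h | h | h <;> simp [h]

section FiniteField

variable {F R : Type*} [Field F] [Fintype F] [CommRing R]

lemma card_mul_sum_filter_eq_zero [DecidableEq F] [IsDomain R] {X : Type*} [Fintype X]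
    {ψ : AddChar F R} (hψ : ψ.IsPrimitive) (f : X → F) (g : X → R) :
    (Fintype.card F : R) * ∑ x ∈ univ.filter (fun x => f x = 0), g x =
      ∑ t, ∑ x, ψ (t * f x) * g x := by
  rw [sum_comm, mul_sum, sum_filter]
  refine sum_congr rfl fun x _ => ?_
  rw [← sum_mul, AddChar.sum_mulShift _ hψ]
  split_ifs <;> simp

lemma sum_addChar_sumSq_add_eq_prod {ι : Type*} [Fintype ι] [DecidableEq ι]
    (ψ : AddChar F R) (t : F) (α : ι → F) :
    ∑ ξ : ι → F, ψ (t * ∑ i, ξ i * ξ i + ∑ i, α i * ξ i) =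
      ∏ i, ∑ x, ψ (t * (x * x) + α i * x) := by
  rw [Fintype.prod_sum]
  refine sum_congr rfl fun ξ _ => ?_
  rw [← AddChar.map_sum_eq_prod, mul_sum, ← sum_add_distrib]

lemma sum_addChar_mul_sq_add (hF : ringChar F ≠ 2) (ψ : AddChar F R) {t : F} (ht : t ≠ 0)
    (a : F) :
    ∑ x, ψ (t * (x * x) + a * x) = ψ (-(a * a) / 4 * t⁻¹) * ∑ x, ψ (t * (x * x)) := by
  have h2 : (2 : F) ≠ 0 := Ring.two_ne_zero hF
  have h4 : (4 : F) ≠ 0 := by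
    rw [show (4 : F) = 2 * 2 by norm_num]
    exact mul_ne_zero h2 h2
  have hsquare (x : F) : t * (x * x) + a * x =
      -(a * a) / 4 * t⁻¹ + t * ((x + a / (2 * t)) * (x + a / (2 * t))) := by
    field_simp
    ring
  simp_rw [hsquare, AddChar.map_add_eq_mul, ← mul_sum]
  congr 1
  exact Fintype.sum_equiv (Equiv.addRight _) _ _ fun x => rfl

lemma sum_mulChar_mul_addChar_mul_inv {χ : MulChar F R} (hχ : χ.IsQuadratic) (ψ : AddChar F R)
    (b : F) :
    ∑ t, χ t * ψ (b * t⁻¹) = gaussSum χ (ψ.mulShift b) := by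
  refine Fintype.sum_equiv (Equiv.inv F) _ _ fun t => ?_
  simp [hχ.apply_inv]

noncomputable def quadraticCharIn (F R : Type*) [Field F] [Fintype F] [DecidableEq F]
    [CommRing R] : MulChar F R :=
  (quadraticChar F).ringHomComp (Int.castRingHom R)

variable [DecidableEq F]

lemma quadraticCharIn_apply (a : F) : quadraticCharIn F R a = (quadraticChar F a : R) := rfl

lemma quadraticCharIn_isQuadratic : (quadraticCharIn F R).IsQuadratic :=
  (quadraticChar_isQuadratic F).comp _

lemma quadraticCharIn_ne_one [CharZero R] (hF : ringChar F ≠ 2) : quadraticCharIn F R ≠ 1 :=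
  (MulChar.ringHomComp_ne_one_iff Int.cast_injective).mpr (quadraticChar_ne_one hF)

lemma card_filter_sq_eq_quadraticCharIn_add_one (hF : ringChar F ≠ 2) (y : F) :
    ((univ.filter fun x : F => x ^ 2 = y).card : R) = quadraticCharIn F R y + 1 := by
  rw [quadraticCharIn_apply, ← Set.toFinset_ofPred]
  exact_mod_cast congrArg (Int.cast : ℤ → R) (quadraticChar_card_sqrts hF y)

lemma sum_addChar_mul_sq [IsDomain R] (hF : ringChar F ≠ 2) {ψ : AddChar F R}
    (hψ : ψ.IsPrimitive) {b : F} (hb : b ≠ 0) :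
    ∑ x, ψ (b * (x * x)) = quadraticCharIn F R b * gaussSum (quadraticCharIn F R) ψ := by
  have hfibers : ∑ x, ψ (b * (x * x)) =
      ∑ y, ((univ.filter fun x : F => x ^ 2 = y).card : R) * ψ (b * y) := by
    rw [← sum_fiberwise univ (fun x : F => x ^ 2)]
    refine sum_congr rfl fun y _ => ?_
    rw [← nsmul_eq_mul, ← sum_const]
    refine sum_congr rfl fun x hx => ?_
    rw [← (mem_filter.mp hx).2, sq]
  have hvanish : ∑ y, ψ (b * y) = 0 := by
    simp_rw [mul_comm b, AddChar.sum_mulShift _ hψ, if_neg hb, Nat.cast_zero]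
  simp_rw [hfibers, card_filter_sq_eq_quadraticCharIn_add_one hF, add_mul, one_mul,
    sum_add_distrib, hvanish, add_zero]
  calc ∑ y, quadraticCharIn F R y * ψ (b * y)
      = gaussSum (quadraticCharIn F R) (ψ.mulShift b) := rfl
    _ = (quadraticCharIn F R)⁻¹ b * gaussSum (quadraticCharIn F R) ψ :=
      gaussSum_mulShift_eq _ _ (Units.mk0 b hb)
    _ = quadraticCharIn F R b * gaussSum (quadraticCharIn F R) ψ := by
      rw [quadraticCharIn_isQuadratic.inv]

lemma prod_sum_addChar_mul [IsDomain R] {ι : Type*} [Fintype ι] {ψ : AddChar F R}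
    (hψ : ψ.IsPrimitive) (α : ι → F) :
    ∏ i, ∑ x, ψ (α i * x) = if α = 0 then (Fintype.card F : R) ^ Fintype.card ι else 0 := by
  have hsum (a : F) : ∑ x, ψ (a * x) = if a = 0 then (Fintype.card F : R) else 0 := by
    simp_rw [mul_comm a]
    exact_mod_cast AddChar.sum_mulShift a hψ
  simp_rw [hsum, Fintype.prod_ite_zero, prod_const, card_univ, funext_iff, Pi.zero_apply]

lemma prod_sum_addChar_mul_sq_add [IsDomain R] {ι : Type*} [Fintype ι] (hF : ringChar F ≠ 2)
    {ψ : AddChar F R} (hψ : ψ.IsPrimitive) (hι : Odd (Fintype.card ι)) {t : F} (ht : t ≠ 0)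
    (α : ι → F) :
    ∏ i, ∑ x, ψ (t * (x * x) + α i * x) =
      quadraticCharIn F R t * ψ (-(∑ i, α i * α i) / 4 * t⁻¹) *
        gaussSum (quadraticCharIn F R) ψ ^ Fintype.card ι := by
  have hpow : quadraticCharIn F R t ^ Fintype.card ι = quadraticCharIn F R t := by
    rw [← MulChar.pow_apply' _ hι.pos.ne', quadraticCharIn_isQuadratic.pow_odd hι]
  simp_rw [sum_addChar_mul_sq_add hF ψ ht, sum_addChar_mul_sq hF hψ ht, prod_mul_distrib,
    prod_const, card_univ, hpow, ← AddChar.map_sum_eq_prod, ← sum_mul, ← sum_div,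
    sum_neg_distrib]
  ring

end FiniteField

section Complex

variable {F : Type*} [Field F] [Fintype F]

lemma norm_gaussSum_le_sqrt {χ : MulChar F ℂ} (hχ₁ : χ ≠ 1) (hχ₂ : χ.IsQuadratic)
    {ψ : AddChar F ℂ} (hψ : ψ.IsPrimitive) :
    ‖gaussSum χ ψ‖ ≤ √(Fintype.card F) := by
  refine Real.le_sqrt_of_sq_le ?_
  calc ‖gaussSum χ ψ‖ ^ 2 = ‖χ (-1)‖ * Fintype.card F := by
        rw [← norm_pow, gaussSum_sq hχ₁ hχ₂ hψ, norm_mul, Complex.norm_natCast]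
    _ ≤ 1 * Fintype.card F := by gcongr; exact hχ₂.norm_apply_le_one _
    _ = Fintype.card F := one_mul _

lemma norm_gaussSum_mulShift_le_sqrt {χ : MulChar F ℂ} (hχ₁ : χ ≠ 1) (hχ₂ : χ.IsQuadratic)
    {ψ : AddChar F ℂ} (hψ : ψ.IsPrimitive) (b : F) :
    ‖gaussSum χ (ψ.mulShift b)‖ ≤ √(Fintype.card F) := by
  rcases eq_or_ne b 0 with rfl | hb
  · rw [AddChar.mulShift_zero, gaussSum_one_right hχ₁, norm_zero]
    positivity
  · rw [← Units.val_mk0 hb, gaussSum_mulShift_eq, Units.val_mk0, hχ₂.inv, norm_mul]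
    calc ‖χ b‖ * ‖gaussSum χ ψ‖ ≤ 1 * √(Fintype.card F) := by
          gcongr
          exacts [hχ₂.norm_apply_le_one _, norm_gaussSum_le_sqrt hχ₁ hχ₂ hψ]
      _ = √(Fintype.card F) := one_mul _

end Complex

section ZeroSphere

variable {F ι : Type*} [Field F] [Fintype F] [DecidableEq F] [Fintype ι] [DecidableEq ι]

def zeroSphere (ι F : Type*) [Field F] [Fintype F] [DecidableEq F] [Fintype ι] [DecidableEq ι] :
    Finset (ι → F) :=
  univ.filter fun ξ => ∑ i, ξ i * ξ i = 0

lemma card_mul_sum_zeroSphere_eq {R : Type*} [CommRing R] [IsDomain R] (hF : ringChar F ≠ 2)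
    {ψ : AddChar F R} (hψ : ψ.IsPrimitive) (hι : Odd (Fintype.card ι)) (α : ι → F) :
    (Fintype.card F : R) *
        ∑ ξ ∈ zeroSphere ι F, ψ (∑ i, α i * ξ i) =
      (if α = 0 then (Fintype.card F : R) ^ Fintype.card ι else 0) +
        gaussSum (quadraticCharIn F R) (ψ.mulShift (-(∑ i, α i * α i) / 4)) *
          gaussSum (quadraticCharIn F R) ψ ^ Fintype.card ι := by
  have hsummand (t : F) : ∏ i, ∑ x, ψ (t * (x * x) + α i * x) =
      (if t = 0 then (if α = 0 then (Fintype.card F : R) ^ Fintype.card ι else 0) else 0) +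
        quadraticCharIn F R t * ψ (-(∑ i, α i * α i) / 4 * t⁻¹) *
          gaussSum (quadraticCharIn F R) ψ ^ Fintype.card ι := by
    rcases eq_or_ne t 0 with rfl | ht
    · simp_rw [zero_mul, zero_add, prod_sum_addChar_mul hψ, if_pos, MulChar.map_zero, zero_mul,
        add_zero]
    · rw [if_neg ht, zero_add, prod_sum_addChar_mul_sq_add hF hψ hι ht]
  rw [zeroSphere, card_mul_sum_filter_eq_zero hψ]
  simp_rw [← AddChar.map_add_eq_mul, sum_addChar_sumSq_add_eq_prod, hsummand, sum_add_distrib,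
    sum_ite_eq', if_pos (mem_univ _), ← sum_mul,
    sum_mulChar_mul_addChar_mul_inv quadraticCharIn_isQuadratic]

lemma card_zeroSphere (hF : ringChar F ≠ 2) (hι : Odd (Fintype.card ι)) :
    #(zeroSphere ι F) =
      Fintype.card F ^ (Fintype.card ι - 1) := by
  obtain ⟨ψ, hψ⟩ : ∃ ψ : AddChar F ℂ, ψ 1 ≠ 1 := AddChar.exists_apply_ne_zero.mpr one_ne_zero
  have hprim : ψ.IsPrimitive := AddChar.IsPrimitive.of_ne_one fun h => hψ (by simp [h])
  have key := card_mul_sum_zeroSphere_eq hF hprim hι 0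
  simp only [Pi.zero_apply, zero_mul, sum_const_zero, AddChar.map_zero_eq_one, sum_const,
    nsmul_one, neg_zero, zero_div, AddChar.mulShift_zero,
    gaussSum_one_right (quadraticCharIn_ne_one hF), if_pos, add_zero] at key
  rw [← Nat.sub_one_add_one hι.pos.ne', pow_succ', mul_right_inj' (by simp)] at key
  exact_mod_cast key

lemma norm_sum_zeroSphere_le (hF : ringChar F ≠ 2) {ψ : AddChar F ℂ} (hψ : ψ.IsPrimitive)
    (hι : Odd (Fintype.card ι)) {α : ι → F} (hα : α ≠ 0) :
    ‖∑ ξ ∈ zeroSphere ι F, ψ (∑ i, α i * ξ i)‖ ≤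
      (Fintype.card F : ℝ) ^ (((Fintype.card ι : ℝ) - 1) / 2) := by
  have key := card_mul_sum_zeroSphere_eq hF hψ hι α
  rw [if_neg hα, zero_add] at key
  have hbound : (Fintype.card F : ℝ) * ‖∑ ξ ∈ zeroSphere ι F,
      ψ (∑ i, α i * ξ i)‖ ≤ √(Fintype.card F) * √(Fintype.card F) ^ Fintype.card ι := by
    have hnorm := congrArg norm key
    rw [norm_mul, Complex.norm_natCast, norm_mul, norm_pow] at hnorm
    rw [hnorm]
    gcongr
    exacts [norm_gaussSum_mulShift_le_sqrt (quadraticCharIn_ne_one hF)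
        quadraticCharIn_isQuadratic hψ _,
      norm_gaussSum_le_sqrt (quadraticCharIn_ne_one hF) quadraticCharIn_isQuadratic hψ]
  obtain ⟨m, hm⟩ := hι
  have hexp : ((Fintype.card ι : ℝ) - 1) / 2 = m := by rw [hm]; push_cast; ring
  have hsqrt : √(Fintype.card F) * √(Fintype.card F) ^ Fintype.card ι =
      (Fintype.card F : ℝ) * (Fintype.card F : ℝ) ^ m := by
    rw [hm, ← pow_succ', show 2 * m + 1 + 1 = 2 * (m + 1) by ring, pow_mul,
      Real.sq_sqrt (Nat.cast_nonneg _), pow_succ']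
  rw [hsqrt] at hbound
  rw [hexp, Real.rpow_natCast]
  exact le_of_mul_le_mul_left hbound (by simp [Fintype.card_pos])

end ZeroSphere

theorem stmt7_general (n : ℕ) (hnodd : Odd n) :
    ∃ C : ℝ, 0 < C ∧
      ∀ (F : Type) [Field F] [Fintype F] [DecidableEq F], ringChar F ≠ 2 →
      ∀ (e : AddChar F ℂ), e ≠ 1 →
        (∀ α : Fin n → F, α ≠ 0 →
          ‖∑ ξ ∈ Finset.univ.filter (fun ξ : Fin n → F => ∑ i, ξ i * ξ i = 0),
              e (∑ i, α i * ξ i)‖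
            ≤ C * (Fintype.card F : ℝ) ^ (((n : ℝ) - 1) / 2)) ∧
        C⁻¹ * (Fintype.card F : ℝ) ^ (n - 1) ≤
          ((Finset.univ.filter (fun ξ : Fin n → F => ∑ i, ξ i * ξ i = 0)).card : ℝ) ∧
        ((Finset.univ.filter (fun ξ : Fin n → F => ∑ i, ξ i * ξ i = 0)).card : ℝ) ≤
          C * (Fintype.card F : ℝ) ^ (n - 1) := by
  refine ⟨1, one_pos, fun F _ _ _ hF e he => ?_⟩
  have hι : Odd (Fintype.card (Fin n)) := by rwa [Fintype.card_fin]
  have hcard : (#(zeroSphere (Fin n) F) : ℝ) = (Fintype.card F : ℝ) ^ (n - 1) := by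
    rw [card_zeroSphere hF hι, Fintype.card_fin, Nat.cast_pow]
  refine ⟨fun α hα => ?_, le_of_eq ?_, le_of_eq ?_⟩
  · have hbound := norm_sum_zeroSphere_le hF (AddChar.IsPrimitive.of_ne_one he) hι hα
    rw [Fintype.card_fin] at hbound
    rw [one_mul]
    exact hbound
  · rw [inv_one, one_mul]
    exact hcard.symm
  · rw [one_mul]
    exact hcard

/-- Let `n ≥ 3` be odd. There is `C = C(n) > 0` such that for every finite field `F` of
odd characteristic and every nontrivial additive character `e` of `F`, the 0-sphere
`S₀ = {ξ ∈ F^n : ξ·ξ = 0}` satisfies `|∑_{ξ∈S₀} e(α·ξ)| ≤ C |F|^{(n-1)/2}` for all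
`α ≠ 0`, and `C⁻¹ |F|^{n-1} ≤ |S₀| ≤ C |F|^{n-1}`. -/
theorem stmt7 (n : ℕ) (hn : 3 ≤ n) (hnodd : Odd n) :
    ∃ C : ℝ, 0 < C ∧
      ∀ (F : Type) [Field F] [Fintype F] [DecidableEq F], ringChar F ≠ 2 →
      ∀ (e : AddChar F ℂ), e ≠ 1 →
        (∀ α : Fin n → F, α ≠ 0 →
          ‖∑ ξ ∈ Finset.univ.filter (fun ξ : Fin n → F => ∑ i, ξ i * ξ i = 0),
              e (∑ i, α i * ξ i)‖
            ≤ C * (Fintype.card F : ℝ) ^ (((n : ℝ) - 1) / 2)) ∧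
        C⁻¹ * (Fintype.card F : ℝ) ^ (n - 1) ≤
          ((Finset.univ.filter (fun ξ : Fin n → F => ∑ i, ξ i * ξ i = 0)).card : ℝ) ∧
        ((Finset.univ.filter (fun ξ : Fin n → F => ∑ i, ξ i * ξ i = 0)).card : ℝ) ≤
          C * (Fintype.card F : ℝ) ^ (n - 1) :=
  stmt7_general n hnodd
end

section
/- Let F be a finite field of odd characteristic and d ≥ 2 an integer. Let P ⊆ F^d be the paraboloid, let A ⊆ P, and let B ⊆ P be such that every y = (ȳ, y_d) ∈ B satisfies ȳ·ȳ ≠ 0. Then the number of pairs (x,y) ∈ A × B with x − y ∈ P is at most |F|^{-1} |A| |B| + |F|^{(d-2)/2} |A|^{1/2} |B|^{1/2}. -/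
/-!
Write `q = |F|` and `n = d - 1`. For `x = (ū, ū·ū)` and `y = (w̄, w̄·w̄)` on the paraboloid,
`x - y ∈ P` reads `w̄·ū = w̄·w̄` once the factor `2` is cancelled: `ū` lies on the affine
hyperplane through `w̄` orthogonal to `w̄`. For `w̄·w̄ ≠ 0` these hyperplanes have `q^(n-1)`
points and two distinct ones meet in at most `q^(n-2)` points (their normals are independent,
or they are parallel). So the centred indicators `1_H - 1/q` are pairwise non-positively
correlated, their sum has second moment at most `|B| q^(n-1)`, and Cauchy–Schwarz over `A`
bounds the deviation of the incidence count from `|A||B|/q` by `√(q^(n-1) |A||B|)`.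
-/

open Finset Matrix

section Incidences

variable {V ι : Type*} [Fintype V] [DecidableEq V]

def centeredIndicator (s : Finset V) (δ : ℝ) (v : V) : ℝ := (if v ∈ s then 1 else 0) - δ

theorem sum_centeredIndicator_mul (s t : Finset V) (δ : ℝ) :
    ∑ v, centeredIndicator s δ v * centeredIndicator t δ v =
      #(s ∩ t) - δ * (#s + #t) + δ ^ 2 * Fintype.card V := by
  have hexpand (v : V) : centeredIndicator s δ v * centeredIndicator t δ v =
      (if v ∈ s ∩ t then 1 else 0) - δ * ((if v ∈ s then 1 else 0) + (if v ∈ t then 1 else 0))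
        + δ ^ 2 := by
    by_cases hs : v ∈ s <;> by_cases ht : v ∈ t <;>
      simp only [centeredIndicator, mem_inter, hs, ht, and_true, and_false, ↓reduceIte] <;> ring
  simp only [hexpand, sum_add_distrib, sum_sub_distrib, ← mul_sum, sum_ite_mem, univ_inter,
    sum_const, card_univ, nsmul_eq_mul, mul_one]
  ring

theorem sum_sq_sum_centeredIndicator_le {H : ι → Finset V} {J : Finset ι} {δ : ℝ}
    (hH : ∀ j ∈ J, (#(H j) : ℝ) = δ * Fintype.card V)
    (hHH : ∀ i ∈ J, ∀ j ∈ J, i ≠ j → (#(H i ∩ H j) : ℝ) ≤ δ ^ 2 * Fintype.card V) :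
    ∑ v, (∑ j ∈ J, centeredIndicator (H j) δ v) ^ 2 ≤ #J * (δ * Fintype.card V) := by
  classical
  have hpair : ∀ i ∈ J, ∀ j ∈ J, ∑ v, centeredIndicator (H i) δ v * centeredIndicator (H j) δ v
      = #(H i ∩ H j) - δ ^ 2 * Fintype.card V := by
    intro i hi j hj
    rw [sum_centeredIndicator_mul, hH i hi, hH j hj]
    ring
  calc ∑ v, (∑ j ∈ J, centeredIndicator (H j) δ v) ^ 2
      = ∑ i ∈ J, ∑ j ∈ J, ∑ v, centeredIndicator (H i) δ v * centeredIndicator (H j) δ v := by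
        simp_rw [sq, sum_mul_sum]
        rw [sum_comm]
        exact sum_congr rfl fun _ _ => sum_comm
    _ ≤ ∑ i ∈ J, δ * Fintype.card V := by
        gcongr with i hi
        rw [← add_sum_erase J _ hi, hpair i hi i hi, inter_self, hH i hi]
        have hoff : ∑ j ∈ J.erase i,
            ∑ v, centeredIndicator (H i) δ v * centeredIndicator (H j) δ v ≤ 0 := by
          refine sum_nonpos fun j hj => ?_
          rw [hpair i hi j (mem_of_mem_erase hj)]
          linarith [hHH i hi j (mem_of_mem_erase hj) (ne_of_mem_erase hj).symm]
        have : 0 ≤ δ ^ 2 * Fintype.card V := by positivity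
        linarith
    _ = #J * (δ * Fintype.card V) := by rw [sum_const, nsmul_eq_mul]

theorem card_incidences_le (A : Finset V) (J : Finset ι) (H : ι → Finset V) {δ : ℝ}
    (hH : ∀ j ∈ J, (#(H j) : ℝ) = δ * Fintype.card V)
    (hHH : ∀ i ∈ J, ∀ j ∈ J, i ≠ j → (#(H i ∩ H j) : ℝ) ≤ δ ^ 2 * Fintype.card V) :
    (#{p ∈ A ×ˢ J | p.1 ∈ H p.2} : ℝ) ≤
      δ * #A * #J + √(δ * Fintype.card V) * √(#A) * √(#J) := by
  set g : V → ℝ := fun v => ∑ j ∈ J, centeredIndicator (H j) δ v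
  have hcount : (#{p ∈ A ×ˢ J | p.1 ∈ H p.2} : ℝ) = δ * #A * #J + ∑ a ∈ A, g a := by
    simp only [card_filter, sum_product, g, centeredIndicator, sum_sub_distrib, sum_const,
      nsmul_eq_mul]
    push_cast
    ring
  have hCS : ∑ a ∈ A, g a ≤ √(#A) * √(∑ v, g v ^ 2) := by
    calc ∑ a ∈ A, g a = ∑ a ∈ A, 1 * g a := by simp
      _ ≤ √(∑ _a ∈ A, 1 ^ 2) * √(∑ a ∈ A, g a ^ 2) := Real.sum_mul_le_sqrt_mul_sqrt _ _ _
      _ ≤ √(#A) * √(∑ v, g v ^ 2) := by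
        simp only [one_pow, sum_const, nsmul_eq_mul, mul_one]
        gcongr
        exact subset_univ A
  calc (#{p ∈ A ×ˢ J | p.1 ∈ H p.2} : ℝ)
      ≤ δ * #A * #J + √(#A) * √(#J * (δ * Fintype.card V)) := by
        rw [hcount]
        gcongr
        exact hCS.trans (by gcongr; exact sum_sq_sum_centeredIndicator_le hH hHH)
    _ = δ * #A * #J + √(δ * Fintype.card V) * √(#A) * √(#J) := by
        rw [Real.sqrt_mul (Nat.cast_nonneg _)]
        ring

end Incidences

theorem AddMonoidHom.card_fiber_mul_card_of_surjective {V W : Type*} [AddGroup V] [Fintype V]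
    [AddMonoid W] [Fintype W] [DecidableEq W] (φ : V →+ W) (hφ : Function.Surjective φ) (c : W) :
    #{v | φ v = c} * Fintype.card W = Fintype.card V := by
  have hfib (w : W) : #{v | φ v = w} = #{v | φ v = c} :=
    AddMonoidHom.card_fiber_eq_of_mem_range φ (hφ w) (hφ c)
  have hsum := card_eq_sum_card_fiberwise (s := univ) (t := univ) (f := φ) fun _ _ => mem_univ _
  rw [card_univ, sum_congr rfl fun w _ => hfib w, sum_const, card_univ, smul_eq_mul] at hsum
  rw [hsum, mul_comm]

section LinearAlgebra

variable {F ι : Type*} [Field F] [Fintype F] [DecidableEq F] [Fintype ι] [DecidableEq ι]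

theorem card_filter_mulVec_eq_mul {m : Type*} [Fintype m] [DecidableEq m] {M : Matrix m ι F}
    (hM : LinearIndependent F M.row) (c : m → F) :
    #{u | M *ᵥ u = c} * Fintype.card (m → F) = Fintype.card (ι → F) := by
  have hsurj : Function.Surjective M.mulVecLin := by
    rw [← LinearMap.range_eq_top]
    exact Submodule.eq_top_of_finrank_eq
      (hM.rank_matrix.trans (Module.finrank_fintype_fun_eq_card F).symm)
  exact M.mulVecLin.toAddMonoidHom.card_fiber_mul_card_of_surjective hsurj c

theorem card_filter_dotProduct_eq_mul {a : ι → F} (ha : a ≠ 0) (c : F) :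
    #{u | a ⬝ᵥ u = c} * Fintype.card F = Fintype.card (ι → F) := by
  convert card_filter_mulVec_eq_mul (M := of ![a]) (linearIndependent_unique_iff.mpr ha) ![c]
    using 2
  · congr 1; ext u; simp [funext_iff]
  · simp

theorem card_filter_dotProduct_eq_and_eq_mul {a b : ι → F}
    (hab : LinearIndependent F ![a, b]) (c c' : F) :
    #{u | a ⬝ᵥ u = c ∧ b ⬝ᵥ u = c'} * Fintype.card F ^ 2 = Fintype.card (ι → F) := by
  convert card_filter_mulVec_eq_mul (M := of ![a, b]) hab ![c, c'] using 3
  · ext u; simp [funext_iff, Fin.forall_fin_two]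
  · simp

def perpHyperplane (w : ι → F) : Finset (ι → F) := {u | w ⬝ᵥ u = w ⬝ᵥ w}

theorem card_perpHyperplane {w : ι → F} (hw : w ≠ 0) :
    (#(perpHyperplane w) : ℝ) = (Fintype.card F : ℝ)⁻¹ * Fintype.card (ι → F) := by
  have hq : (Fintype.card F : ℝ) ≠ 0 := by positivity
  rw [eq_inv_mul_iff_mul_eq₀ hq, mul_comm]
  exact_mod_cast card_filter_dotProduct_eq_mul hw (w ⬝ᵥ w)

theorem perpHyperplane_inter_smul_eq_empty {w : ι → F} (hw : w ⬝ᵥ w ≠ 0) {c : F} (hc₀ : c ≠ 0)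
    (hc₁ : c ≠ 1) : perpHyperplane w ∩ perpHyperplane (c • w) = ∅ := by
  ext u
  simp only [perpHyperplane, mem_inter, mem_filter, mem_univ, true_and, smul_dotProduct,
    dotProduct_smul, smul_eq_mul, notMem_empty, iff_false, not_and]
  intro hu hcu
  rw [hu] at hcu
  have : c * (1 - c) * (w ⬝ᵥ w) = 0 := by linear_combination hcu
  simp [sub_eq_zero, hc₀, Ne.symm hc₁, hw] at this

theorem card_perpHyperplane_inter_le {v w : ι → F} (hv : v ⬝ᵥ v ≠ 0) (hw : w ≠ 0) (hvw : v ≠ w) :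
    (#(perpHyperplane v ∩ perpHyperplane w) : ℝ) ≤
      (Fintype.card F : ℝ)⁻¹ ^ 2 * Fintype.card (ι → F) := by
  have hv₀ : v ≠ 0 := by rintro rfl; simp at hv
  by_cases hind : LinearIndependent F ![v, w]
  · have hq : (Fintype.card F : ℝ) ^ 2 ≠ 0 := by positivity
    refine le_of_eq ?_
    rw [inv_pow, eq_inv_mul_iff_mul_eq₀ hq, mul_comm, perpHyperplane, perpHyperplane,
      ← filter_and]
    exact_mod_cast card_filter_dotProduct_eq_and_eq_mul hind _ _
  · obtain ⟨c, rfl⟩ : ∃ c : F, c • v = w := by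
      simpa [LinearIndependent.pair_iff' hv₀] using hind
    have hc₀ : c ≠ 0 := by rintro rfl; simp at hw
    have hc₁ : c ≠ 1 := by rintro rfl; simp at hvw
    rw [perpHyperplane_inter_smul_eq_empty hv hc₀ hc₁, card_empty, Nat.cast_zero]
    positivity

end LinearAlgebra

section Paraboloid
variable {F ι : Type*} [Field F] [Fintype ι]

def paraboloid : Set ((ι → F) × F) := {x | x.2 = x.1 ⬝ᵥ x.1}

theorem injOn_fst_paraboloid : Set.InjOn Prod.fst (paraboloid : Set ((ι → F) × F)) :=
  fun x hx y hy h => Prod.ext h (by rw [hx, hy, h])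

variable [Fintype F] [DecidableEq F] [DecidableEq ι]

theorem sub_mem_paraboloid_iff (hchar : ringChar F ≠ 2) {x y : (ι → F) × F}
    (hx : x ∈ paraboloid) (hy : y ∈ paraboloid) :
    x - y ∈ paraboloid ↔ x.1 ∈ perpHyperplane y.1 := by
  have h2 : (2 : F) ≠ 0 := Ring.two_ne_zero hchar
  simp only [paraboloid, Set.mem_ofPred_eq, perpHyperplane, mem_filter, mem_univ, true_and,
    Prod.fst_sub, Prod.snd_sub, sub_dotProduct, dotProduct_sub, dotProduct_comm x.1 y.1] at hx hy ⊢
  rw [hx, hy]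
  constructor
  · intro h
    exact mul_left_cancel₀ h2 (by linear_combination h)
  · intro h
    linear_combination 2 * h

theorem card_filter_sub_mem_paraboloid (hchar : ringChar F ≠ 2)
    {A B : Finset ((ι → F) × F)} (hA : ∀ x ∈ A, x ∈ paraboloid) (hB : ∀ y ∈ B, y ∈ paraboloid) :
    #{p ∈ A ×ˢ B | (p.1 - p.2).2 = (p.1 - p.2).1 ⬝ᵥ (p.1 - p.2).1} =
      #{p ∈ A.image Prod.fst ×ˢ B | p.1 ∈ perpHyperplane p.2.1} := by
  refine card_nbij' (fun p => (p.1.1, p.2)) (fun p => ((p.1, p.1 ⬝ᵥ p.1), p.2)) ?_ ?_ ?_ ?_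
  · rintro ⟨x, y⟩ hp
    simp only [coe_filter, mem_product, Set.mem_ofPred_eq] at hp ⊢
    exact ⟨⟨mem_image_of_mem _ hp.1.1, hp.1.2⟩,
      (sub_mem_paraboloid_iff hchar (hA x hp.1.1) (hB y hp.1.2)).mp hp.2⟩
  · rintro ⟨u, y⟩ hp
    simp only [coe_filter, mem_product, mem_image, Set.mem_ofPred_eq] at hp ⊢
    obtain ⟨⟨⟨x, hx, rfl⟩, hy⟩, hxy⟩ := hp
    rw [← hA x hx]
    exact ⟨⟨hx, hy⟩, (sub_mem_paraboloid_iff hchar (hA x hx) (hB y hy)).mpr hxy⟩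
  · rintro ⟨x, y⟩ hp
    simp only [coe_filter, mem_product, Set.mem_ofPred_eq] at hp
    exact Prod.ext (Prod.ext rfl (hA x hp.1.1).symm) rfl
  · intro p _
    rfl

end Paraboloid

/-- Let `F` be a finite field of odd characteristic, `d ≥ 2`, `P ⊆ F^d` the paraboloid
(points of `F^d` modeled as pairs `(x̄, x_d) ∈ F^{d-1} × F`), `A ⊆ P`, and `B ⊆ P` such
that every `y = (ȳ, y_d) ∈ B` has `ȳ·ȳ ≠ 0`. Then the number of pairs `(x,y) ∈ A × B`
with `x − y ∈ P` is at most `|F|⁻¹ |A||B| + |F|^{(d-2)/2} |A|^{1/2} |B|^{1/2}`. -/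
theorem stmt12 (F : Type) [Field F] [Fintype F] [DecidableEq F]
    (hchar : ringChar F ≠ 2) (d : ℕ) (hd : 2 ≤ d)
    (A B : Finset ((Fin (d - 1) → F) × F))
    (hA : ∀ p ∈ A, p.2 = ∑ i, p.1 i * p.1 i)
    (hB : ∀ p ∈ B, p.2 = ∑ i, p.1 i * p.1 i ∧ (∑ i, p.1 i * p.1 i) ≠ 0) :
    ((((A ×ˢ B).filter
        (fun p => (p.1 - p.2).2 = ∑ i, (p.1 - p.2).1 i * (p.1 - p.2).1 i)).card : ℝ))
      ≤ (Fintype.card F : ℝ)⁻¹ * (A.card : ℝ) * (B.card : ℝ) +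
        (Fintype.card F : ℝ) ^ (((d : ℝ) - 2) / 2) *
          Real.sqrt (A.card : ℝ) * Real.sqrt (B.card : ℝ) := by
  set q : ℝ := (Fintype.card F : ℝ)
  have hq : 0 < q := by positivity
  have hB' : ∀ y ∈ B, y ∈ paraboloid := fun y hy => (hB y hy).1
  have hBne : ∀ y ∈ B, y.1 ≠ 0 := fun y hy h => (hB y hy).2 (by simp [h])
  have hcardA : #(A.image Prod.fst) = #A :=
    card_image_of_injOn (injOn_fst_paraboloid.mono hA)
  have hsqrt : √(q⁻¹ * Fintype.card (Fin (d - 1) → F)) = q ^ (((d : ℝ) - 2) / 2) := by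
    rw [Fintype.card_fun, Fintype.card_fin, Nat.cast_pow, Real.sqrt_eq_rpow, ← Real.rpow_natCast,
      ← Real.rpow_neg_one, ← Real.rpow_add hq, ← Real.rpow_mul hq.le, Nat.cast_sub (by omega)]
    congr 1
    push_cast
    ring
  calc _ = (#{p ∈ A.image Prod.fst ×ˢ B | p.1 ∈ perpHyperplane p.2.1} : ℝ) :=
        congrArg Nat.cast (card_filter_sub_mem_paraboloid hchar hA hB')
    _ ≤ _ := card_incidences_le _ B (fun y => perpHyperplane y.1)
        (fun y hy => card_perpHyperplane (hBne y hy))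
        (fun y hy z hz hyz => card_perpHyperplane_inter_le (hB y hy).2 (hBne z hz)
          fun h => hyz (injOn_fst_paraboloid (hB' y hy) (hB' z hz) h))
    _ = _ := by rw [hcardA, hsqrt]
end

section
/- Let F be a finite field of odd characteristic, e a nontrivial additive character of F, d ≥ 2, and P ⊆ F^d the paraboloid. Define (dσ)^∨(x) = |F|^{-(d-1)} ∑_{ξ∈P} e(x·ξ) and the Gauss sum 𝒢(t) = ∑_{s∈F} e(t s²) for t ∈ F. Then: (dσ)^∨(x) = 1 if x = 0; (dσ)^∨(x) = 0 if x_d = 0 and x ≠ 0; and (dσ)^∨(x) = |F|^{-(d-1)} e( x̄·x̄ / (−4 x_d) ) 𝒢(x_d)^{d-1} if x_d ≠ 0. Consequently |(dσ)^∨(x)| ≤ |F|^{(1-d)/2} for every x ≠ 0. -/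
/-!
The phase `x̄·ȳ + x_d (ȳ·ȳ)` is a sum of one-variable terms, so the sum over the paraboloid
factors into `d - 1` one-dimensional sums `∑ₛ e(x_i s + x_d s²)`. If `x_d = 0` such a factor is a
complete character sum and vanishes as soon as `x_i ≠ 0`. If `x_d ≠ 0`, completing the square
turns each factor into `e(x_i² / (-4 x_d)) 𝒢(x_d)`, and `|𝒢(t)|² = |F|` because after the
substitution `s = s' + h` the product `𝒢(t) · conj 𝒢(t)` collapses onto `h = 0`.
-/

open Finset

namespace AddChar

lemma map_sum_eq_prod_s14 {R M : Type*} [AddCommMonoid R] [CommMonoid M] (ψ : AddChar R M)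
    {ι : Type*} (s : Finset ι) (f : ι → R) : ψ (∑ i ∈ s, f i) = ∏ i ∈ s, ψ (f i) := by
  classical
  induction s using Finset.induction_on with
  | empty => simp
  | insert a s ha ih => rw [sum_insert ha, prod_insert ha, map_add_eq_mul, ih]

section CommRing

variable {R M : Type*} [CommRing R] [Fintype R] [CommRing M] (ψ : AddChar R M)

lemma sum_pi_linear_add_diagonal_eq_prod {ι : Type*} [Fintype ι] [DecidableEq ι]
    (a : ι → R) (b : R) :
    ∑ y : ι → R, ψ (∑ i, a i * y i + b * ∑ i, y i * y i)
      = ∏ i, ∑ s, ψ (a i * s + b * (s * s)) := by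
  rw [Fintype.prod_sum]
  refine sum_congr rfl fun y _ => ?_
  rw [mul_sum, ← sum_add_distrib, map_sum_eq_prod_s14]

end CommRing

section Field

variable {F M : Type*} [Field F] [Fintype F] [CommRing M] (ψ : AddChar F M)

lemma sum_linear_add_quadratic_eq (h2 : (2 : F) ≠ 0) (a : F) {b : F} (hb : b ≠ 0) :
    ∑ s, ψ (a * s + b * (s * s)) = ψ (a * a * (-(4 * b))⁻¹) * ∑ s, ψ (b * s ^ 2) := by
  have h4 : (4 : F) ≠ 0 := by simpa [show (4 : F) = 2 * 2 by norm_num] using h2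
  rw [mul_sum]
  refine Fintype.sum_equiv (Equiv.addRight (a * (2 * b)⁻¹)) _ _ fun s => ?_
  rw [← map_add_eq_mul, Equiv.coe_addRight]
  congr 1
  field_simp
  ring

lemma sum_pi_linear_add_diagonal_eq (h2 : (2 : F) ≠ 0) {ι : Type*} [Fintype ι]
    [DecidableEq ι] (a : ι → F) {b : F} (hb : b ≠ 0) :
    ∑ y : ι → F, ψ (∑ i, a i * y i + b * ∑ i, y i * y i)
      = ψ ((∑ i, a i * a i) * (-(4 * b))⁻¹) * (∑ s, ψ (b * s ^ 2)) ^ Fintype.card ι := by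
  simp_rw [sum_pi_linear_add_diagonal_eq_prod, sum_linear_add_quadratic_eq ψ h2 _ hb,
    prod_mul_distrib, prod_const, card_univ, ← map_sum_eq_prod_s14, sum_mul]

lemma sum_pi_linear_eq_zero [IsDomain M] (hψ : ψ ≠ 1) {ι : Type*} [Fintype ι] [DecidableEq ι]
    {a : ι → F} (ha : a ≠ 0) :
    ∑ y : ι → F, ψ (∑ i, a i * y i + 0 * ∑ i, y i * y i) = 0 := by
  classical
  obtain ⟨i, hi⟩ : ∃ i, a i ≠ 0 := Function.ne_iff.mp ha
  rw [sum_pi_linear_add_diagonal_eq_prod]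
  refine prod_eq_zero (mem_univ i) ?_
  simpa [mul_comm, hi] using sum_mulShift (R' := M) (a i) (IsPrimitive.of_ne_one hψ)

end Field

lemma norm_sum_mul_sq {F : Type*} [Field F] [Fintype F] {ψ : AddChar F ℂ} (hψ : ψ ≠ 1)
    (h2 : (2 : F) ≠ 0) {t : F} (ht : t ≠ 0) :
    ‖∑ s, ψ (t * s ^ 2)‖ = √(Fintype.card F) := by
  classical
  have : (∑ s, ψ (t * s ^ 2)) * starRingEnd ℂ (∑ s, ψ (t * s ^ 2)) = Fintype.card F := by
    calc (∑ s, ψ (t * s ^ 2)) * starRingEnd ℂ (∑ s, ψ (t * s ^ 2))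
        = ∑ s', ∑ h, ψ (t * h ^ 2) * ψ (s' * (2 * t * h)) := by
          rw [map_sum, sum_mul_sum, sum_comm]
          refine sum_congr rfl fun s' _ => ?_
          refine Fintype.sum_equiv (Equiv.subRight s') _ _ fun s => ?_
          rw [Equiv.subRight_apply, ← map_neg_eq_conj, ← map_add_eq_mul, ← map_add_eq_mul]
          congr 1
          ring
      _ = ∑ h, ψ (t * h ^ 2) * if 2 * t * h = 0 then (Fintype.card F : ℂ) else 0 := by
          rw [sum_comm]
          simp_rw [← mul_sum, sum_mulShift _ (IsPrimitive.of_ne_one hψ)]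
          push_cast
          rfl
      _ = Fintype.card F := by simp [h2, ht]
  rw [Complex.mul_conj, Complex.normSq_eq_norm_sq] at this
  rw [← Real.sqrt_sq (norm_nonneg _), show ‖∑ s, ψ (t * s ^ 2)‖ ^ 2 = Fintype.card F by
    exact_mod_cast this]
end AddChar

lemma inv_pow_mul_sqrt_pow_le_rpow {q : ℝ} (hq : 1 ≤ q) (d : ℕ) :
    (q ^ (d - 1))⁻¹ * √q ^ (d - 1) ≤ q ^ ((1 - (d : ℝ)) / 2) := by
  have hq0 : 0 ≤ q := zero_le_one.trans hq
  have hd : (d : ℝ) - 1 ≤ ((d - 1 : ℕ) : ℝ) := by rcases d with _ | d <;> simp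
  calc (q ^ (d - 1))⁻¹ * √q ^ (d - 1) = q ^ (-((d - 1 : ℕ) : ℝ) / 2) := by
        rw [Real.sqrt_eq_rpow, ← Real.rpow_natCast, ← Real.rpow_natCast, ← Real.rpow_mul hq0,
          ← Real.rpow_neg hq0, ← Real.rpow_add (by linarith)]
        ring_nf
    _ ≤ q ^ ((1 - (d : ℝ)) / 2) := Real.rpow_le_rpow_of_exponent_le hq (by linarith)

theorem stmt14_general (F : Type) [Field F] [Fintype F] (hchar : ringChar F ≠ 2)
    (e : AddChar F ℂ) (he : e ≠ 1) (d : ℕ) :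
    let dsv : ((Fin (d - 1) → F) × F) → ℂ := fun x =>
      ((Fintype.card F : ℂ) ^ (d - 1))⁻¹ *
        ∑ y : Fin (d - 1) → F, e (∑ i, x.1 i * y i + x.2 * ∑ i, y i * y i)
    let G : F → ℂ := fun t => ∑ s : F, e (t * s ^ 2)
    dsv 0 = 1 ∧
    (∀ x : (Fin (d - 1) → F) × F, x.2 = 0 → x ≠ 0 → dsv x = 0) ∧
    (∀ x : (Fin (d - 1) → F) × F, x.2 ≠ 0 →
      dsv x = ((Fintype.card F : ℂ) ^ (d - 1))⁻¹ *
        e ((∑ i, x.1 i * x.1 i) * (-(4 * x.2))⁻¹) * (G x.2) ^ (d - 1)) ∧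
    (∀ x : (Fin (d - 1) → F) × F, x ≠ 0 →
      ‖dsv x‖ ≤ (Fintype.card F : ℝ) ^ ((1 - (d : ℝ)) / 2)) := by
  intro dsv G
  have h2 : (2 : F) ≠ 0 := Ring.two_ne_zero hchar
  have hvanish : ∀ x : (Fin (d - 1) → F) × F, x.2 = 0 → x ≠ 0 → dsv x = 0 := by
    rintro ⟨a, b⟩ (rfl : b = 0) hx
    have ha : a ≠ 0 := fun ha => hx (by simp [ha])
    simp only [dsv, e.sum_pi_linear_eq_zero he ha, mul_zero]
  have hformula : ∀ x : (Fin (d - 1) → F) × F, x.2 ≠ 0 →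
      dsv x = ((Fintype.card F : ℂ) ^ (d - 1))⁻¹ *
        e ((∑ i, x.1 i * x.1 i) * (-(4 * x.2))⁻¹) * (G x.2) ^ (d - 1) := by
    intro x hx
    simp only [dsv, G, e.sum_pi_linear_add_diagonal_eq h2 x.1 hx, Fintype.card_fin, mul_assoc]
  refine ⟨by simp [dsv], hvanish, hformula, fun x hx => ?_⟩
  by_cases hx2 : x.2 = 0
  · rw [hvanish x hx2 hx, norm_zero]
    positivity
  · rw [hformula x hx2, norm_mul, norm_mul, norm_inv, norm_pow, norm_pow, Complex.norm_natCast,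
      AddChar.norm_apply, mul_one, e.norm_sum_mul_sq he h2 hx2]
    exact inv_pow_mul_sqrt_pow_le_rpow (by exact_mod_cast Fintype.card_pos) d

/-- Evaluation of `(dσ)^∨` for the paraboloid `P ⊆ F^d` (points of `F^d` modeled as pairs
`(x̄, x_d) ∈ F^{d-1} × F`): with `(dσ)^∨(x) = |F|^{-(d-1)} ∑_{ξ∈P} e(x·ξ)` and Gauss sum
`𝒢(t) = ∑_{s∈F} e(t s²)`, one has `(dσ)^∨(0) = 1`, `(dσ)^∨(x) = 0` when `x_d = 0, x ≠ 0`,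
`(dσ)^∨(x) = |F|^{-(d-1)} e(x̄·x̄/(−4x_d)) 𝒢(x_d)^{d-1}` when `x_d ≠ 0`, and consequently
`|(dσ)^∨(x)| ≤ |F|^{(1-d)/2}` for all `x ≠ 0`. -/
theorem stmt14 (F : Type) [Field F] [Fintype F] (hchar : ringChar F ≠ 2)
    (e : AddChar F ℂ) (he : e ≠ 1) (d : ℕ) (hd : 2 ≤ d) :
    let dsv : ((Fin (d - 1) → F) × F) → ℂ := fun x =>
      ((Fintype.card F : ℂ) ^ (d - 1))⁻¹ *
        ∑ y : Fin (d - 1) → F, e (∑ i, x.1 i * y i + x.2 * ∑ i, y i * y i)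
    let G : F → ℂ := fun t => ∑ s : F, e (t * s ^ 2)
    dsv 0 = 1 ∧
    (∀ x : (Fin (d - 1) → F) × F, x.2 = 0 → x ≠ 0 → dsv x = 0) ∧
    (∀ x : (Fin (d - 1) → F) × F, x.2 ≠ 0 →
      dsv x = ((Fintype.card F : ℂ) ^ (d - 1))⁻¹ *
        e ((∑ i, x.1 i * x.1 i) * (-(4 * x.2))⁻¹) * (G x.2) ^ (d - 1)) ∧
    (∀ x : (Fin (d - 1) → F) × F, x ≠ 0 →
      ‖dsv x‖ ≤ (Fintype.card F : ℝ) ^ ((1 - (d : ℝ)) / 2)) :=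
  stmt14_general F hchar e he d
end

section
/- Let F be a finite field of odd characteristic, e a nontrivial additive character of F, d ≥ 2, and 𝒢(t) = ∑_{s∈F} e(t s²). Define K : F^d → ℂ by K(x) = |F|^{-(d-1)} e( x̄·x̄ / (−4 x_d) ) 𝒢(x_d)^{d-1} when x_d ≠ 0 and K(x) = 0 when x_d = 0. Let S ⊆ F^{d-1}, z ∈ F, let u : F^d → ℂ be the indicator function of S × {z}, and let f_S : P → {0,1} be the indicator of the lifted set {(x̄, x̄·x̄) : x̄ ∈ S} ⊆ P. Then ∑_{x∈F^d} |(u * K)(x)|⁴ ≤ |F|^{2d-2} ∑_{x∈F^d} |(f_S dσ)^∨(x)|⁴, where (u*K)(x) = ∑_{y∈F^d} u(y) K(x−y). -/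
/-!
For `t = x_d - z ≠ 0`, completing the square in `(x̄ - a)·(x̄ - a) / (-4t)` gives
`(u * K)(x) = 𝒢(t)^{d-1} e(x̄·x̄ / (-4t)) (f_S dσ)^∨(x̄ / (2t), -1 / (4t))`,
and `|𝒢(t)|² = |F|` (shift the summation variable and use orthogonality of `e`). Hence
`|(u * K)(x)|⁴ = |F|^{2d-2} |(f_S dσ)^∨(φ x)|⁴` for a map `φ` injective on `{x_d ≠ z}`,
while `(u * K)(x) = 0` when `x_d = z`.
-/

open Finset

namespace AddChar

variable {F : Type*} [Field F] [Fintype F]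

theorem norm_sum_apply_sq_sq (hF : ringChar F ≠ 2) {ψ : AddChar F ℂ} (hψ : ψ ≠ 1) :
    ‖∑ s : F, ψ (s ^ 2)‖ ^ 2 = Fintype.card F := by
  classical
  have h2 : (2 : F) ≠ 0 := Ring.two_ne_zero hF
  have hmul_conj :
      (∑ a : F, ψ (a ^ 2)) * starRingEnd ℂ (∑ b : F, ψ (b ^ 2)) = Fintype.card F :=
    calc _ = ∑ b : F, ∑ a : F, ψ ((a + b) ^ 2 - b ^ 2) := by
          rw [map_sum, sum_mul_sum, sum_comm]
          refine sum_congr rfl fun b _ => ?_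
          rw [← Equiv.sum_comp (Equiv.addRight b)]
          simp [← inv_apply_eq_conj, ← map_neg_eq_inv, ← map_add_eq_mul, sub_eq_add_neg]
      _ = ∑ a : F, ψ (a ^ 2) * ∑ b : F, ψ (b * (2 * a)) := by
          rw [sum_comm]
          simp_rw [mul_sum, ← map_add_eq_mul]
          congr! 3
          ring
      _ = Fintype.card F := by
          simp [sum_mulShift _ (IsPrimitive.of_ne_one hψ), h2]
  rw [Complex.mul_conj'] at hmul_conj
  exact_mod_cast hmul_conj

theorem norm_sum_apply_mul_sq_sq (hF : ringChar F ≠ 2) {ψ : AddChar F ℂ} (hψ : ψ ≠ 1)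
    {t : F} (ht : t ≠ 0) : ‖∑ s : F, ψ (t * s ^ 2)‖ ^ 2 = Fintype.card F := by
  simpa using norm_sum_apply_sq_sq hF (IsPrimitive.of_ne_one hψ ht)

end AddChar

theorem sum_sub_mul_self_mul {R ι : Type*} [CommRing R] [Fintype ι] (x a : ι → R) (c : R) :
    (∑ i, (x i - a i) * (x i - a i)) * c =
      (∑ i, x i * x i) * c + (∑ i, -(2 * c) * x i * a i + c * ∑ i, a i * a i) := by
  simp only [sum_mul, mul_sum, ← sum_add_distrib]
  exact sum_congr rfl fun i _ => by ring

section Paraboloid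

variable {F : Type} [Field F] {d : ℕ}

def paraboloidDualPoint (z : F) (x : (Fin (d - 1) → F) × F) : (Fin (d - 1) → F) × F :=
  (fun i => -(2 * (-(4 * (x.2 - z)))⁻¹) * x.1 i, (-(4 * (x.2 - z)))⁻¹)

theorem injOn_paraboloidDualPoint (hF : ringChar F ≠ 2) (z : F) :
    Set.InjOn (paraboloidDualPoint (d := d) z) {x | x.2 ≠ z} := by
  have h2 : (2 : F) ≠ 0 := Ring.two_ne_zero hF
  have h4 : (4 : F) ≠ 0 := by simpa [show (4 : F) = 2 * 2 by norm_num] using h2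
  intro x hx y _ hxy
  obtain ⟨hfst, hsnd⟩ := Prod.ext_iff.mp hxy
  simp only [paraboloidDualPoint] at hfst hsnd
  have h22 : x.2 = y.2 := by simpa [h4] using hsnd
  have hc : 2 * (-(4 * (x.2 - z)))⁻¹ ≠ 0 := by simp [h2, h4, sub_ne_zero.mpr hx]
  rw [← h22] at hfst
  exact Prod.ext (funext fun i => mul_left_cancel₀ (neg_ne_zero.mpr hc) (congrFun hfst i)) h22

variable [Fintype F] [DecidableEq F]

noncomputable def paraboloidKernel (e : AddChar F ℂ) (x : (Fin (d - 1) → F) × F) : ℂ :=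
  if x.2 = 0 then 0 else
    ((Fintype.card F : ℂ) ^ (d - 1))⁻¹ *
      e ((∑ i, x.1 i * x.1 i) * (-(4 * x.2))⁻¹) * (∑ s : F, e (x.2 * s ^ 2)) ^ (d - 1)

theorem sum_indicator_mul_paraboloidKernel (e : AddChar F ℂ) (S : Finset (Fin (d - 1) → F))
    (z : F) (x : (Fin (d - 1) → F) × F) :
    ∑ y, (if y.1 ∈ S ∧ y.2 = z then 1 else 0) * paraboloidKernel e (x - y) =
      ∑ a ∈ S, paraboloidKernel e (x.1 - a, x.2 - z) := by
  simp [Fintype.sum_prod_type, ite_and, sum_ite_mem, Prod.sub_def]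

theorem extOp_indicator (e : AddChar F ℂ) (S : Finset (Fin (d - 1) → F))
    (x : (Fin (d - 1) → F) × F) :
    extOp e (fun w => if w ∈ S then 1 else 0) x =
      ((Fintype.card F : ℂ) ^ (d - 1))⁻¹ *
        ∑ a ∈ S, e (∑ i, x.1 i * a i + x.2 * ∑ i, a i * a i) := by
  simp [extOp, sum_ite_mem]

theorem sum_paraboloidKernel_eq (e : AddChar F ℂ) (S : Finset (Fin (d - 1) → F)) {z : F}
    {x : (Fin (d - 1) → F) × F} (hx : x.2 ≠ z) :
    ∑ a ∈ S, paraboloidKernel e (x.1 - a, x.2 - z) =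
      (∑ s : F, e ((x.2 - z) * s ^ 2)) ^ (d - 1) *
        e ((∑ i, x.1 i * x.1 i) * (-(4 * (x.2 - z)))⁻¹) *
          extOp e (fun w => if w ∈ S then 1 else 0) (paraboloidDualPoint z x) := by
  simp only [extOp_indicator, paraboloidKernel, paraboloidDualPoint, sub_eq_zero, hx, if_false,
    Pi.sub_apply, sum_sub_mul_self_mul, AddChar.map_add_eq_mul, mul_sum]
  exact sum_congr rfl fun a _ => by ring

theorem norm_sum_paraboloidKernel_pow_four (hF : ringChar F ≠ 2) {e : AddChar F ℂ}
    (he : e ≠ 1) (S : Finset (Fin (d - 1) → F)) {z : F} {x : (Fin (d - 1) → F) × F}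
    (hx : x.2 ≠ z) :
    ‖∑ a ∈ S, paraboloidKernel e (x.1 - a, x.2 - z)‖ ^ 4 =
      (Fintype.card F : ℝ) ^ (2 * d - 2) *
        ‖extOp e (fun w => if w ∈ S then 1 else 0) (paraboloidDualPoint z x)‖ ^ 4 := by
  rw [sum_paraboloidKernel_eq e S hx, norm_mul, norm_mul, norm_pow, AddChar.norm_apply, mul_one,
    mul_pow, ← pow_mul, show (d - 1) * 4 = 2 * (2 * d - 2) by omega, pow_mul,
    AddChar.norm_sum_apply_mul_sq_sq hF he (sub_ne_zero.mpr hx)]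

end Paraboloid

theorem stmt15_general (F : Type) [Field F] [Fintype F] [DecidableEq F]
    (hchar : ringChar F ≠ 2) (e : AddChar F ℂ) (he : e ≠ 1) (d : ℕ)
    (S : Finset (Fin (d - 1) → F)) (z : F) :
    let K : ((Fin (d - 1) → F) × F) → ℂ := fun x =>
      if x.2 = 0 then 0 else
        ((Fintype.card F : ℂ) ^ (d - 1))⁻¹ *
          e ((∑ i, x.1 i * x.1 i) * (-(4 * x.2))⁻¹) * (∑ s : F, e (x.2 * s ^ 2)) ^ (d - 1)
    let u : ((Fin (d - 1) → F) × F) → ℂ := fun x => if x.1 ∈ S ∧ x.2 = z then 1 else 0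
    let fS : (Fin (d - 1) → F) → ℂ := fun w => if w ∈ S then 1 else 0
    ∑ x : (Fin (d - 1) → F) × F, ‖∑ y : (Fin (d - 1) → F) × F, u y * K (x - y)‖ ^ 4
      ≤ (Fintype.card F : ℝ) ^ (2 * d - 2) *
          ∑ x : (Fin (d - 1) → F) × F, ‖extOp e fS x‖ ^ 4 := by
  intro K u fS
  change ∑ x, ‖∑ y, u y * paraboloidKernel e (x - y)‖ ^ 4 ≤ _
  simp only [u, sum_indicator_mul_paraboloidKernel]
  set offPlane : Finset ((Fin (d - 1) → F) × F) := univ.filter fun x => x.2 ≠ z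
  have hvanish : ∀ x ∈ univ, x ∉ offPlane →
      ‖∑ a ∈ S, paraboloidKernel e (x.1 - a, x.2 - z)‖ ^ 4 = 0 :=
    fun x _ hx => by simp_all [offPlane, paraboloidKernel]
  have hinj : Set.InjOn (paraboloidDualPoint z) (offPlane : Set ((Fin (d - 1) → F) × F)) :=
    (injOn_paraboloidDualPoint hchar z).mono fun _ hx => (mem_filter.mp hx).2
  calc _ = ∑ x ∈ offPlane, ‖∑ a ∈ S, paraboloidKernel e (x.1 - a, x.2 - z)‖ ^ 4 :=
        (sum_subset (subset_univ offPlane) hvanish).symm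
    _ = (Fintype.card F : ℝ) ^ (2 * d - 2) *
          ∑ x ∈ offPlane, ‖extOp e fS (paraboloidDualPoint z x)‖ ^ 4 := by
        rw [mul_sum]
        exact sum_congr rfl fun x hx =>
          norm_sum_paraboloidKernel_pow_four hchar he S (mem_filter.mp hx).2
    _ = (Fintype.card F : ℝ) ^ (2 * d - 2) *
          ∑ y ∈ offPlane.image (paraboloidDualPoint z), ‖extOp e fS y‖ ^ 4 := by
        rw [sum_image hinj]
    _ ≤ _ := mul_le_mul_of_nonneg_left (sum_le_univ_sum_of_nonneg fun _ => by positivity)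
        (by positivity)

/-- With `K(x) = |F|^{-(d-1)} e(x̄·x̄/(−4x_d)) 𝒢(x_d)^{d-1}` for `x_d ≠ 0` (and `K(x) = 0`
for `x_d = 0`), `u` the indicator of `S × {z}` for `S ⊆ F^{d-1}`, and `f_S` the indicator
of the lift of `S` to the paraboloid,
`∑_x |(u * K)(x)|⁴ ≤ |F|^{2d-2} ∑_x |(f_S dσ)^∨(x)|⁴`. -/
theorem stmt15 (F : Type) [Field F] [Fintype F] [DecidableEq F]
    (hchar : ringChar F ≠ 2) (e : AddChar F ℂ) (he : e ≠ 1) (d : ℕ) (hd : 2 ≤ d)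
    (S : Finset (Fin (d - 1) → F)) (z : F) :
    let K : ((Fin (d - 1) → F) × F) → ℂ := fun x =>
      if x.2 = 0 then 0 else
        ((Fintype.card F : ℂ) ^ (d - 1))⁻¹ *
          e ((∑ i, x.1 i * x.1 i) * (-(4 * x.2))⁻¹) * (∑ s : F, e (x.2 * s ^ 2)) ^ (d - 1)
    let u : ((Fin (d - 1) → F) × F) → ℂ := fun x => if x.1 ∈ S ∧ x.2 = z then 1 else 0
    let fS : (Fin (d - 1) → F) → ℂ := fun w => if w ∈ S then 1 else 0
    ∑ x : (Fin (d - 1) → F) × F, ‖∑ y : (Fin (d - 1) → F) × F, u y * K (x - y)‖ ^ 4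
      ≤ (Fintype.card F : ℝ) ^ (2 * d - 2) *
          ∑ x : (Fin (d - 1) → F) × F, ‖extOp e fS x‖ ^ 4 :=
  stmt15_general F hchar e he d S z
end
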